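/- arXiv:2407.17127 — 5 statements merged into one kernel-verified Lean document; each statement's English description precedes it below -/
import Mathlib

section
/- Strassen's theorem with deficiency (discrete version): Let d₁ and d₂ be full discrete distributions on countable sets A and B respectively, let R ⊆ A × B be a relation, and let 0 ≤ ε ≤ 1. Then there exists a coupling μ of d₁ and d₂ with μ(complement of R) ≤ ε if and only if for all events E ⊆ A, d₁(E) ≤ d₂(R(E)) + ε, where R(E) = {b ∈ B ∣ ∃ a ∈ E, (a,b) ∈ R}. -/
open scoped ENNReal
open Filter

noncomputable section

/-- Total mass of a discrete (sub-)distribution. -/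
def mass {A : Type*} (d : A → ℝ≥0∞) : ℝ≥0∞ := ∑' a, d a

/-- A sub-distribution: total mass at most one. -/
def IsSubDist {A : Type*} (d : A → ℝ≥0∞) : Prop := mass d ≤ 1

/-- First marginal. -/
def fstMarg {A B : Type*} (μ : A × B → ℝ≥0∞) : A → ℝ≥0∞ := fun a => ∑' b, μ (a, b)

/-- Second marginal. -/
def sndMarg {A B : Type*} (μ : A × B → ℝ≥0∞) : B → ℝ≥0∞ := fun b => ∑' a, μ (a, b)

/-- A coupling of `d₁` and `d₂`: a joint (sub-)distribution whose marginals are `d₁`, `d₂`. -/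
def IsCoupling {A B : Type*} (μ : A × B → ℝ≥0∞) (d₁ : A → ℝ≥0∞) (d₂ : B → ℝ≥0∞) : Prop :=
  fstMarg μ = d₁ ∧ sndMarg μ = d₂

/-- Extension `d⋆` of a sub-distribution to `A ⊎ {⋆}` (modelled as `Option A`),
placing the missing mass on `⋆ = none`. -/
def starExt {A : Type*} (d : A → ℝ≥0∞) : Option A → ℝ≥0∞
  | none => 1 - mass d
  | some a => d a

/-- A `⋆`-coupling of `d₁` and `d₂`: a full distribution on `A⋆ × B⋆`
whose marginals are `d₁⋆` and `d₂⋆`. -/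
def IsStarCoupling {A B : Type*} (μ : Option A × Option B → ℝ≥0∞)
    (d₁ : A → ℝ≥0∞) (d₂ : B → ℝ≥0∞) : Prop :=
  mass μ = 1 ∧ fstMarg μ = starExt d₁ ∧ sndMarg μ = starExt d₂

/-- Extension `f⋆` of a nonnegative function to `A⋆ × B⋆`, zero on pairs involving `⋆`. -/
def fstar {A B : Type*} (f : A × B → ℝ≥0∞) : Option A × Option B → ℝ≥0∞
  | (some a, some b) => f (a, b)
  | _ => 0

/-- Expected value of `f` under `d`. -/
def expec {A : Type*} (d : A → ℝ≥0∞) (f : A → ℝ≥0∞) : ℝ≥0∞ := ∑' a, d a * f a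

/-- Probability of an event under `d`. -/
def evP {A : Type*} (d : A → ℝ≥0∞) (E : Set A) : ℝ≥0∞ := ∑' a, E.indicator d a

/-- Total variation distance (with `|x - y|` rendered as `(x - y) ⊔ (y - x)` in `ℝ≥0∞`). -/
def tv {A : Type*} (d₁ d₂ : A → ℝ≥0∞) : ℝ≥0∞ :=
  ⨆ E : Set A, (evP d₁ E - evP d₂ E) ⊔ (evP d₂ E - evP d₁ E)


section StrassenAuxSec
namespace StrassenAux
open Topology
attribute [local instance] Classical.propDecidable
variable {A B : Type*}

lemma mass_eq_fst (μ : A × B → ℝ≥0∞) : mass μ = ∑' a, fstMarg μ a := by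
  rw [mass, ENNReal.tsum_prod']
  rfl

lemma mass_eq_snd (μ : A × B → ℝ≥0∞) : mass μ = ∑' b, sndMarg μ b := by
  rw [mass, ENNReal.tsum_prod', ENNReal.tsum_comm]
  rfl

lemma le_fstMarg (μ : A × B → ℝ≥0∞) (a : A) (b : B) : μ (a, b) ≤ fstMarg μ a :=
  ENNReal.le_tsum b

lemma le_sndMarg (μ : A × B → ℝ≥0∞) (a : A) (b : B) : μ (a, b) ≤ sndMarg μ b :=
  ENNReal.le_tsum a

lemma le_mass (d : A → ℝ≥0∞) (a : A) : d a ≤ mass d := ENNReal.le_tsum a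

lemma evP_le_mass (d : A → ℝ≥0∞) (E : Set A) : evP d E ≤ mass d :=
  Summable.tsum_le_tsum (fun a => Set.indicator_le_self E d a) ENNReal.summable ENNReal.summable

lemma evP_mono_set (d : A → ℝ≥0∞) {E E' : Set A} (h : E ⊆ E') : evP d E ≤ evP d E' :=
  Summable.tsum_le_tsum (fun a => Set.indicator_le_indicator_of_subset h (fun _ => zero_le) a)
    ENNReal.summable ENNReal.summable

lemma evP_union_le (d : A → ℝ≥0∞) (E E' : Set A) : evP d (E ∪ E') ≤ evP d E + evP d E' := by
  rw [evP, evP, evP, ← ENNReal.tsum_add]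
  refine Summable.tsum_le_tsum (fun a => ?_) ENNReal.summable ENNReal.summable
  by_cases h : a ∈ E
  · by_cases h' : a ∈ E' <;> simp [Set.indicator, h, h']
  · by_cases h' : a ∈ E' <;> simp [Set.indicator, h, h']

lemma evP_congr_fun {d d' : A → ℝ≥0∞} {E : Set A} (h : ∀ a ∈ E, d a = d' a) :
    evP d E = evP d' E := by
  refine tsum_congr fun a => ?_
  by_cases ha : a ∈ E
  · simp [Set.indicator, ha, h a ha]
  · simp [Set.indicator, ha]

lemma evP_congr_set {d : A → ℝ≥0∞} {E E' : Set A} (h : ∀ p, d p ≠ 0 → (p ∈ E ↔ p ∈ E')) :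
    evP d E = evP d E' := by
  refine tsum_congr fun a => ?_
  by_cases hz : d a = 0
  · by_cases ha : a ∈ E <;> by_cases ha' : a ∈ E' <;> simp [Set.indicator, ha, ha', hz]
  · have := h a hz
    by_cases ha : a ∈ E
    · simp [Set.indicator, ha, this.mp ha]
    · have ha' : a ∉ E' := fun h' => ha (this.mpr h')
      simp [Set.indicator, ha, ha']

lemma evP_add (d d' : A → ℝ≥0∞) (E : Set A) :
    evP (fun a => d a + d' a) E = evP d E + evP d' E := by
  rw [evP, evP, evP, ← ENNReal.tsum_add]
  refine tsum_congr fun a => ?_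
  by_cases ha : a ∈ E <;> simp [Set.indicator, ha]

lemma evP_prod_left (μ : A × B → ℝ≥0∞) (E : Set A) :
    evP μ (E ×ˢ Set.univ) = evP (fstMarg μ) E := by
  rw [evP, evP, ENNReal.tsum_prod']
  refine tsum_congr fun a => ?_
  by_cases ha : a ∈ E
  · simp only [Set.indicator, ha, Set.mem_prod, Set.mem_univ, and_true, if_true, fstMarg]
  · simp [Set.indicator, ha, Set.mem_prod]

lemma evP_prod_right (μ : A × B → ℝ≥0∞) (F : Set B) :
    evP μ (Set.univ ×ˢ F) = evP (sndMarg μ) F := by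
  rw [evP, evP, ENNReal.tsum_prod', ENNReal.tsum_comm]
  refine tsum_congr fun b => ?_
  by_cases hb : b ∈ F
  · simp only [Set.indicator, hb, Set.mem_prod, Set.mem_univ, true_and, if_true, sndMarg]
  · simp [Set.indicator, hb, Set.mem_prod]

def IsSubflow (d₁ : A → ℝ≥0∞) (d₂ : B → ℝ≥0∞) (R : Set (A × B)) (σ : A × B → ℝ≥0∞) : Prop :=
  (∀ a, fstMarg σ a ≤ d₁ a) ∧ (∀ b, sndMarg σ b ≤ d₂ b) ∧ ∀ p, p ∉ R → σ p = 0

lemma tsum_ite_pair (q : A × B) (δ : ℝ≥0∞) (x : A) :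
    (∑' y, if (x, y) = q then δ else 0) = if x = q.1 then δ else 0 := by
  obtain ⟨qa, qb⟩ := q
  by_cases hx : x = qa
  · subst hx
    simp only [Prod.mk.injEq, true_and]
    exact tsum_ite_eq qb (fun _ => δ)
  · simp only [Prod.mk.injEq, hx, false_and, if_false, tsum_zero]

lemma tsum_ite_pair' (q : A × B) (δ : ℝ≥0∞) (y : B) :
    (∑' x, if (x, y) = q then δ else 0) = if y = q.2 then δ else 0 := by
  obtain ⟨qa, qb⟩ := q
  by_cases hy : y = qb
  · subst hy
    simp only [Prod.mk.injEq, and_true]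
    exact tsum_ite_eq qa (fun _ => δ)
  · simp only [Prod.mk.injEq, hy, and_false, if_false, tsum_zero]

lemma bump_fst (σ : A × B → ℝ≥0∞) (q : A × B) (δ : ℝ≥0∞) (x : A) :
    fstMarg (fun p => σ p + if p = q then δ else 0) x
      = fstMarg σ x + if x = q.1 then δ else 0 := by
  show (∑' y, (σ (x, y) + if (x, y) = q then δ else 0)) = _
  rw [ENNReal.tsum_add, tsum_ite_pair]
  rfl

lemma bump_snd (σ : A × B → ℝ≥0∞) (q : A × B) (δ : ℝ≥0∞) (y : B) :
    sndMarg (fun p => σ p + if p = q then δ else 0) y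
      = sndMarg σ y + if y = q.2 then δ else 0 := by
  show (∑' x, (σ (x, y) + if (x, y) = q then δ else 0)) = _
  rw [ENNReal.tsum_add, tsum_ite_pair']
  rfl

lemma bump_mass (σ : A × B → ℝ≥0∞) (q : A × B) (δ : ℝ≥0∞) :
    mass (fun p => σ p + if p = q then δ else 0) = mass σ + δ := by
  rw [mass, ENNReal.tsum_add, tsum_ite_eq]
  rfl

/-- Reachability by alternating paths. -/
def reach (d₁ : A → ℝ≥0∞) (R : Set (A × B)) (σ : A × B → ℝ≥0∞) : ℕ → Set A
  | 0 => {a | fstMarg σ a < d₁ a}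
  | n + 1 => reach d₁ R σ n ∪
      {a' | ∃ a ∈ reach d₁ R σ n, ∃ b, (a, b) ∈ R ∧ σ (a', b) ≠ 0}

lemma reach_mono_nat (d₁ : A → ℝ≥0∞) (R : Set (A × B)) (σ : A × B → ℝ≥0∞) :
    Monotone (reach d₁ R σ) := by
  refine monotone_nat_of_le_succ fun n => ?_
  intro a ha; exact Or.inl ha

lemma reach_incl {d₁ : A → ℝ≥0∞} {R : Set (A × B)} {σ σ' : A × B → ℝ≥0∞}
    (hf : ∀ x, fstMarg σ' x = fstMarg σ x) (q : A × B)
    (hle : ∀ p, p ≠ q → σ p ≤ σ' p) {n : ℕ} (hq : q.1 ∉ reach d₁ R σ n) :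
    ∀ k ≤ n, reach d₁ R σ k ⊆ reach d₁ R σ' k := by
  intro k hk
  induction k with
  | zero => intro a ha; simpa [reach, hf] using ha
  | succ m ih =>
    intro a ha
    rcases ha with ha | ⟨x, hx, y, hxy, hpos⟩
    · exact Or.inl (ih (le_of_lt (Nat.lt_of_succ_le hk)) ha)
    · by_cases hp : (a, y) = q
      · exfalso
        apply hq
        have : a ∈ reach d₁ R σ (m + 1) := Or.inr ⟨x, hx, y, hxy, hpos⟩
        have h2 := reach_mono_nat d₁ R σ hk this
        have hq1 : q.1 = a := by rw [← hp]
        rw [hq1]; exact h2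
      · refine Or.inr ⟨x, ih (le_of_lt (Nat.lt_of_succ_le hk)) hx, y, hxy, ?_⟩
        intro h0
        exact hpos (le_antisymm (le_trans (hle _ hp) (le_of_eq h0)) (zero_le))

lemma no_aug (d₁ : A → ℝ≥0∞) (d₂ : B → ℝ≥0∞) (R : Set (A × B)) (m : ℝ≥0∞)
    (hm_top : m ≠ ⊤) (hd₂top : ∀ b, d₂ b ≠ ⊤)
    (hmax : ∀ τ, IsSubflow d₁ d₂ R τ → mass τ ≤ m) :
    ∀ n (σ : A × B → ℝ≥0∞), IsSubflow d₁ d₂ R σ → mass σ = m →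
      ∀ a ∈ reach d₁ R σ n, ∀ b, (a, b) ∈ R → sndMarg σ b < d₂ b → False := by
  intro n
  induction n with
  | zero =>
    intro σ hσ hσm a ha b hab hb
    have ha : fstMarg σ a < d₁ a := ha
    set δ := min (d₁ a - fstMarg σ a) (d₂ b - sndMarg σ b) with hδdef
    have hδ1 : δ ≤ d₁ a - fstMarg σ a := min_le_left _ _
    have hδ2 : δ ≤ d₂ b - sndMarg σ b := min_le_right _ _
    have hδpos : 0 < δ := lt_min (tsub_pos_of_lt ha) (tsub_pos_of_lt hb)
    set σ' := fun p => σ p + if p = (a, b) then δ else 0 with hσ'def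
    have hsub : IsSubflow d₁ d₂ R σ' := by
      refine ⟨fun x => ?_, fun y => ?_, fun p hp => ?_⟩
      · rw [hσ'def, bump_fst]
        by_cases hx : x = a
        · subst hx
          simp only [if_pos rfl]
          calc fstMarg σ x + δ ≤ fstMarg σ x + (d₁ x - fstMarg σ x) := add_le_add_right hδ1 _
            _ = d₁ x := add_tsub_cancel_of_le ha.le
        · simpa [hx] using hσ.1 x
      · rw [hσ'def, bump_snd]
        by_cases hy : y = b
        · subst hy
          simp only [if_pos rfl]
          calc sndMarg σ y + δ ≤ sndMarg σ y + (d₂ y - sndMarg σ y) := add_le_add_right hδ2 _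
            _ = d₂ y := add_tsub_cancel_of_le hb.le
        · simpa [hy] using hσ.2.1 y
      · have hpq : p ≠ (a, b) := fun h => hp (h ▸ hab)
        simp [hσ'def, hpq, hσ.2.2 p hp]
    have := hmax σ' hsub
    rw [hσ'def, bump_mass, hσm] at this
    have : δ ≤ 0 := ENNReal.le_of_add_le_add_left hm_top (by simpa using this)
    exact absurd this (not_le.mpr hδpos)
  | succ n ih =>
    intro σ hσ hσm a ha b hab hb
    rcases ha with ha | ⟨x, hx, y, hxy, hpos⟩
    · exact ih σ hσ hσm a ha b hab hb
    by_cases hy : sndMarg σ y < d₂ y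
    · exact ih σ hσ hσm x hx y hxy hy
    have hyeq : sndMarg σ y = d₂ y := le_antisymm (hσ.2.1 y) (not_lt.mp hy)
    have hby : b ≠ y := by rintro rfl; rw [hyeq] at hb; exact lt_irrefl _ hb
    by_cases han : a ∈ reach d₁ R σ n
    · exact ih σ hσ hσm a han b hab hb
    set δ := min (σ (a, y)) (d₂ b - sndMarg σ b) with hδdef
    have hδpos : 0 < δ := lt_min (pos_iff_ne_zero.mpr hpos) (tsub_pos_of_lt hb)
    have hδ1 : δ ≤ σ (a, y) := min_le_left _ _
    have hδ2 : δ ≤ d₂ b - sndMarg σ b := min_le_right _ _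
    set σm := fun p => σ p - if p = (a, y) then δ else 0 with hσmdef
    have hback : σ = fun p => σm p + if p = (a, y) then δ else 0 := by
      funext p
      by_cases hp : p = (a, y)
      · subst hp; simp [hσmdef, tsub_add_cancel_of_le hδ1]
      · simp [hσmdef, hp]
    have hfm : ∀ x', fstMarg σ x' = fstMarg σm x' + if x' = a then δ else 0 := by
      intro x'; conv_lhs => rw [hback]
      exact bump_fst σm (a, y) δ x'
    have hsm : ∀ y', sndMarg σ y' = sndMarg σm y' + if y' = y then δ else 0 := by
      intro y'; conv_lhs => rw [hback]
      exact bump_snd σm (a, y) δ y'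
    have hmass : mass σ = mass σm + δ := by
      conv_lhs => rw [hback]
      exact bump_mass σm (a, y) δ
    set σ' := fun p => σm p + if p = (a, b) then δ else 0 with hσ'def
    have hfm' : ∀ x', fstMarg σ' x' = fstMarg σ x' := by
      intro x'
      rw [hσ'def, bump_fst, hfm x']
    have hsmm : ∀ y', sndMarg σ' y' = sndMarg σm y' + if y' = b then δ else 0 := by
      intro y'; rw [hσ'def]; exact bump_snd σm (a, b) δ y'
    have hsm'b : sndMarg σ' b = sndMarg σ b + δ := by
      rw [hsmm b, hsm b, if_pos rfl, if_neg hby]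
      simp
    have hsm'y : sndMarg σ' y + δ = sndMarg σ y := by
      rw [hsmm y, hsm y, if_pos rfl, if_neg (Ne.symm hby)]
      simp
    have hsub' : IsSubflow d₁ d₂ R σ' := by
      refine ⟨fun x' => by rw [hfm']; exact hσ.1 x', fun y' => ?_, fun p hp => ?_⟩
      · by_cases hy'b : y' = b
        · subst hy'b
          rw [hsm'b]
          calc sndMarg σ y' + δ ≤ sndMarg σ y' + (d₂ y' - sndMarg σ y') := add_le_add_right hδ2 _
            _ = d₂ y' := add_tsub_cancel_of_le (hσ.2.1 y')
        · by_cases hy'y : y' = y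
          · subst hy'y
            calc sndMarg σ' y' ≤ sndMarg σ' y' + δ := le_add_right le_rfl
              _ = sndMarg σ y' := hsm'y
              _ ≤ d₂ y' := hσ.2.1 y'
          · rw [hsmm y', if_neg hy'b, add_zero]
            have h1 := hσ.2.1 y'
            rw [hsm y', if_neg hy'y, add_zero] at h1
            exact h1
      · have hpq : p ≠ (a, b) := fun h => hp (h ▸ hab)
        have : σ p = 0 := hσ.2.2 p hp
        simp only [hσ'def, hσmdef, if_neg hpq, add_zero, this, zero_tsub]
    have hmass' : mass σ' = mass σ := by
      rw [hσ'def, bump_mass, hmass]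
    have hx' : x ∈ reach d₁ R σ' n := by
      refine reach_incl hfm' (a, y) (fun p hp => ?_) (n := n) han n le_rfl hx
      have : σ p = σm p := by
        conv_lhs => rw [hback]
        simp [hp]
      rw [this, hσ'def]
      exact le_add_right le_rfl
    have hylt : sndMarg σ' y < d₂ y := by
      have hfin : sndMarg σ' y ≠ ⊤ := by
        intro h
        have := hsub'.2.1 y
        rw [h] at this
        exact hd₂top y (top_le_iff.mp this)
      calc sndMarg σ' y < sndMarg σ' y + δ := ENNReal.lt_add_right hfin (ne_of_gt hδpos)
        _ = sndMarg σ y := hsm'y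
        _ = d₂ y := hyeq
    exact ih σ' hsub' (by rw [hmass']; exact hσm) x hx' y hxy hylt
lemma tsum_split {α : Type*} (f : α → ℝ≥0∞) (F : Finset α) :
    ∑' x, f x = ∑ x ∈ F, f x + ∑' x : {x // x ∉ F}, f x := by
  rw [← Finset.tsum_subtype]
  exact (Summable.tsum_add_tsum_compl (s := (↑F : Set α)) ENNReal.summable ENNReal.summable).symm

lemma subflow_mass_le {d₁ : A → ℝ≥0∞} {d₂ : B → ℝ≥0∞} {R : Set (A × B)} {τ : A × B → ℝ≥0∞}
    (hτ : IsSubflow d₁ d₂ R τ) : mass τ ≤ mass d₁ := by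
  rw [mass_eq_fst]
  exact Summable.tsum_le_tsum hτ.1 ENNReal.summable ENNReal.summable

lemma mass_le_box {d₁ : A → ℝ≥0∞} {d₂ : B → ℝ≥0∞} {R : Set (A × B)} {τ : A × B → ℝ≥0∞}
    (hτ : IsSubflow d₁ d₂ R τ) (F₁ : Finset A) (F₂ : Finset B) :
    mass τ ≤ ∑ p ∈ F₁ ×ˢ F₂, τ p
      + ((∑' a : {a // a ∉ F₁}, d₁ a) + ∑' b : {b // b ∉ F₂}, d₂ b) := by
  have h1 : mass τ = ∑ a ∈ F₁, fstMarg τ a + ∑' a : {a // a ∉ F₁}, fstMarg τ a := by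
    rw [mass_eq_fst]; exact tsum_split _ F₁
  have h2 : (∑' a : {a // a ∉ F₁}, fstMarg τ a) ≤ ∑' a : {a // a ∉ F₁}, d₁ a :=
    Summable.tsum_le_tsum (fun a => hτ.1 a) ENNReal.summable ENNReal.summable
  have h3 : ∀ a, fstMarg τ a = ∑ b ∈ F₂, τ (a, b) + ∑' b : {b // b ∉ F₂}, τ (a, b) := by
    intro a; exact tsum_split _ F₂
  have h4 : (∑ a ∈ F₁, fstMarg τ a)
      = ∑ a ∈ F₁, ∑ b ∈ F₂, τ (a, b) + ∑ a ∈ F₁, ∑' b : {b // b ∉ F₂}, τ (a, b) := by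
    rw [← Finset.sum_add_distrib]
    exact Finset.sum_congr rfl fun a _ => h3 a
  have h5 : (∑ a ∈ F₁, ∑' b : {b // b ∉ F₂}, τ (a, b)) ≤ ∑' b : {b // b ∉ F₂}, d₂ b := by
    rw [← Summable.tsum_finsetSum (fun i _ => ENNReal.summable)]
    refine Summable.tsum_le_tsum (fun b => ?_) ENNReal.summable ENNReal.summable
    exact le_trans (ENNReal.sum_le_tsum F₁) (hτ.2.1 b)
  calc mass τ = ∑ a ∈ F₁, fstMarg τ a + ∑' a : {a // a ∉ F₁}, fstMarg τ a := h1
    _ ≤ ∑ a ∈ F₁, fstMarg τ a + ∑' a : {a // a ∉ F₁}, d₁ a := add_le_add_right h2 _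
    _ = (∑ a ∈ F₁, ∑ b ∈ F₂, τ (a, b) + ∑ a ∈ F₁, ∑' b : {b // b ∉ F₂}, τ (a, b))
        + ∑' a : {a // a ∉ F₁}, d₁ a := by rw [h4]
    _ ≤ (∑ a ∈ F₁, ∑ b ∈ F₂, τ (a, b) + ∑' b : {b // b ∉ F₂}, d₂ b)
        + ∑' a : {a // a ∉ F₁}, d₁ a := add_le_add_left (add_le_add_right h5 _) _
    _ = ∑ p ∈ F₁ ×ˢ F₂, τ p + ((∑' a : {a // a ∉ F₁}, d₁ a) + ∑' b : {b // b ∉ F₂}, d₂ b) := by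
        rw [Finset.sum_product]
        ring

lemma exists_max_subflow [Countable A] [Countable B] (d₁ : A → ℝ≥0∞) (d₂ : B → ℝ≥0∞)
    (R : Set (A × B)) (hd₁ : mass d₁ ≠ ⊤) (hd₂ : mass d₂ ≠ ⊤) :
    ∃ σ, IsSubflow d₁ d₂ R σ ∧ ∀ τ, IsSubflow d₁ d₂ R τ → mass τ ≤ mass σ := by
  set s := ⨆ τ : {τ // IsSubflow d₁ d₂ R τ}, mass τ.1 with hsdef
  have hzero : IsSubflow d₁ d₂ R (fun _ => 0) := by
    refine ⟨fun a => ?_, fun b => ?_, fun p _ => rfl⟩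
    · simp [fstMarg]
    · simp [sndMarg]
  have hstop : s ≠ ⊤ := by
    refine ne_top_of_le_ne_top hd₁ ?_
    exact iSup_le fun τ => subflow_mass_le τ.2
  have hsel : ∀ n : ℕ, ∃ τ, IsSubflow d₁ d₂ R τ ∧ s ≤ mass τ + ((n : ℝ≥0∞))⁻¹ := by
    intro n
    by_cases hs0 : s = 0
    · exact ⟨fun _ => 0, hzero, by rw [hs0]; exact zero_le⟩
    · have hinv : ((n : ℝ≥0∞))⁻¹ ≠ 0 := ENNReal.inv_ne_zero.mpr (ENNReal.natCast_ne_top n)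
      have hlt : s - ((n : ℝ≥0∞))⁻¹ < s := ENNReal.sub_lt_self hstop hs0 hinv
      rw [hsdef, lt_iSup_iff] at hlt
      obtain ⟨⟨τ, hτ⟩, hlt⟩ := hlt
      exact ⟨τ, hτ, tsub_le_iff_right.mp hlt.le⟩
  choose σseq hseq1 hseq2 using hsel
  obtain ⟨σ, -, φ, hφ, hconv⟩ :=
    IsCompact.tendsto_subseq (x := σseq) isCompact_univ (fun n => Set.mem_univ _)
  have hpt : ∀ p, Tendsto (fun n => σseq (φ n) p) atTop (𝓝 (σ p)) := by
    intro p; exact tendsto_pi_nhds.mp hconv p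
  have hσsub : IsSubflow d₁ d₂ R σ := by
    refine ⟨fun a => ?_, fun b => ?_, fun p hp => ?_⟩
    · show (∑' b, σ (a, b)) ≤ d₁ a
      rw [ENNReal.tsum_eq_iSup_sum]
      refine iSup_le fun F => ?_
      have hT : Tendsto (fun n => ∑ b ∈ F, σseq (φ n) (a, b)) atTop
          (𝓝 (∑ b ∈ F, σ (a, b))) := tendsto_finset_sum F fun b _ => hpt (a, b)
      refine le_of_tendsto hT (Eventually.of_forall fun n => ?_)
      exact le_trans (ENNReal.sum_le_tsum (f := fun b => σseq (φ n) (a, b)) F)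
        ((hseq1 (φ n)).1 a)
    · show (∑' a, σ (a, b)) ≤ d₂ b
      rw [ENNReal.tsum_eq_iSup_sum]
      refine iSup_le fun F => ?_
      have hT : Tendsto (fun n => ∑ a ∈ F, σseq (φ n) (a, b)) atTop
          (𝓝 (∑ a ∈ F, σ (a, b))) := tendsto_finset_sum F fun a _ => hpt (a, b)
      refine le_of_tendsto hT (Eventually.of_forall fun n => ?_)
      exact le_trans (ENNReal.sum_le_tsum (f := fun a => σseq (φ n) (a, b)) F)
        ((hseq1 (φ n)).2.1 b)
    · have h0 : (fun n => σseq (φ n) p) = fun _ => (0 : ℝ≥0∞) :=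
        funext fun n => (hseq1 (φ n)).2.2 p hp
      have := hpt p
      rw [h0] at this
      exact tendsto_nhds_unique this tendsto_const_nhds
  refine ⟨σ, hσsub, fun τ hτ => ?_⟩
  have hτs : mass τ ≤ s := le_iSup (fun τ : {τ // IsSubflow d₁ d₂ R τ} => mass τ.1) ⟨τ, hτ⟩
  refine le_trans hτs ?_
  refine ENNReal.le_of_forall_pos_le_add fun ε hε _ => ?_
  have hε2 : (0 : ℝ≥0∞) < (ε : ℝ≥0∞) / 2 := ENNReal.half_pos (by exact_mod_cast hε.ne')
  obtain ⟨F₁, hF₁⟩ := ((ENNReal.tendsto_tsum_compl_atTop_zero (f := d₁) hd₁).eventually_le_const hε2).exists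
  obtain ⟨F₂, hF₂⟩ := ((ENNReal.tendsto_tsum_compl_atTop_zero (f := d₂) hd₂).eventually_le_const hε2).exists
  have ht0 : Tendsto (fun n => ((φ n : ℝ≥0∞))⁻¹) atTop (𝓝 0) :=
    ENNReal.tendsto_inv_nat_nhds_zero.comp hφ.tendsto_atTop
  have hkey : Tendsto (fun n => ∑ p ∈ F₁ ×ˢ F₂, σseq (φ n) p
      + ((ε : ℝ≥0∞) / 2 + (ε : ℝ≥0∞) / 2) + ((φ n : ℝ≥0∞))⁻¹) atTop
      (𝓝 (∑ p ∈ F₁ ×ˢ F₂, σ p + ((ε : ℝ≥0∞) / 2 + (ε : ℝ≥0∞) / 2) + 0)) := by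
    exact ((tendsto_finset_sum _ fun p _ => hpt p).add tendsto_const_nhds).add ht0
  have hsle : s ≤ ∑ p ∈ F₁ ×ˢ F₂, σ p + ((ε : ℝ≥0∞) / 2 + (ε : ℝ≥0∞) / 2) + 0 := by
    refine ge_of_tendsto hkey (Eventually.of_forall fun n => ?_)
    calc s ≤ mass (σseq (φ n)) + ((φ n : ℝ≥0∞))⁻¹ := hseq2 (φ n)
      _ ≤ (∑ p ∈ F₁ ×ˢ F₂, σseq (φ n) p
            + ((∑' a : {a // a ∉ F₁}, d₁ a) + ∑' b : {b // b ∉ F₂}, d₂ b))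
          + ((φ n : ℝ≥0∞))⁻¹ := add_le_add_left (mass_le_box (hseq1 (φ n)) F₁ F₂) _
      _ ≤ ∑ p ∈ F₁ ×ˢ F₂, σseq (φ n) p + ((ε : ℝ≥0∞) / 2 + (ε : ℝ≥0∞) / 2)
          + ((φ n : ℝ≥0∞))⁻¹ :=
        add_le_add_left (add_le_add_right (add_le_add hF₁ hF₂) _) _
  calc s ≤ ∑ p ∈ F₁ ×ˢ F₂, σ p + ((ε : ℝ≥0∞) / 2 + (ε : ℝ≥0∞) / 2) + 0 := hsle
    _ = ∑ p ∈ F₁ ×ˢ F₂, σ p + (ε : ℝ≥0∞) := by rw [add_zero, ENNReal.add_halves]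
    _ ≤ mass σ + (ε : ℝ≥0∞) := add_le_add_left (ENNReal.sum_le_tsum _) _
end StrassenAux
end StrassenAuxSec

open StrassenAux in
/-- Strassen's theorem with deficiency (discrete version). -/
theorem strassen_with_deficiency {A B : Type*} [Countable A] [Countable B]
    (d₁ : A → ℝ≥0∞) (d₂ : B → ℝ≥0∞) (h₁ : mass d₁ = 1) (h₂ : mass d₂ = 1)
    (R : Set (A × B)) (ε : ℝ≥0∞) (hε : ε ≤ 1) :
    (∃ μ : A × B → ℝ≥0∞, IsCoupling μ d₁ d₂ ∧ evP μ Rᶜ ≤ ε) ↔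
      ∀ E : Set A, evP d₁ E ≤ evP d₂ {b | ∃ a ∈ E, (a, b) ∈ R} + ε := by
  classical
  constructor
  · rintro ⟨μ, ⟨hfst, hsnd⟩, hRc⟩ E
    have hsubset : (E ×ˢ Set.univ : Set (A × B))
        ⊆ (Set.univ ×ˢ {b | ∃ a ∈ E, (a, b) ∈ R}) ∪ Rᶜ := by
      rintro ⟨a, b⟩ ⟨haE, -⟩
      by_cases h : (a, b) ∈ R
      · exact Or.inl ⟨Set.mem_univ _, ⟨a, haE, h⟩⟩
      · exact Or.inr h
    calc evP d₁ E = evP μ (E ×ˢ Set.univ) := by rw [evP_prod_left, hfst]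
      _ ≤ evP μ ((Set.univ ×ˢ {b | ∃ a ∈ E, (a, b) ∈ R}) ∪ Rᶜ) := evP_mono_set μ hsubset
      _ ≤ evP μ (Set.univ ×ˢ {b | ∃ a ∈ E, (a, b) ∈ R}) + evP μ Rᶜ := evP_union_le μ _ _
      _ ≤ evP d₂ {b | ∃ a ∈ E, (a, b) ∈ R} + ε := by
          rw [evP_prod_right, hsnd]; exact add_le_add_right hRc _
  · intro hyp
    obtain ⟨σ, hσ, hmax⟩ := exists_max_subflow d₁ d₂ R
      (by rw [h₁]; exact ENNReal.one_ne_top) (by rw [h₂]; exact ENNReal.one_ne_top)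
    have hmtop : mass σ ≠ ⊤ :=
      ne_top_of_le_ne_top (by rw [h₁]; exact ENNReal.one_ne_top) (subflow_mass_le hσ)
    have hd₂top : ∀ b, d₂ b ≠ ⊤ := fun b =>
      ne_top_of_le_ne_top (by rw [h₂]; exact ENNReal.one_ne_top) (le_mass d₂ b)
    set r₁ := fun a => d₁ a - fstMarg σ a with hr₁def
    set r₂ := fun b => d₂ b - sndMarg σ b with hr₂def
    set E := ⋃ n, reach d₁ R σ n with hEdef
    set F := {b | ∃ a ∈ E, (a, b) ∈ R} with hFdef
    have hbF : ∀ b ∈ F, sndMarg σ b = d₂ b := by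
      intro b hb
      rw [hFdef] at hb
      obtain ⟨a, ha, hab⟩ := hb
      rw [hEdef] at ha
      obtain ⟨n, hn⟩ := Set.mem_iUnion.mp ha
      by_contra hne
      exact no_aug d₁ d₂ R (mass σ) hmtop hd₂top hmax n σ hσ rfl a hn b hab
        (lt_of_le_of_ne (hσ.2.1 b) hne)
    have hclosure : ∀ a b, b ∈ F → σ (a, b) ≠ 0 → a ∈ E := by
      intro a b hb hpos
      rw [hFdef] at hb
      obtain ⟨x, hx, hxb⟩ := hb
      rw [hEdef] at hx
      obtain ⟨n, hn⟩ := Set.mem_iUnion.mp hx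
      rw [hEdef]
      exact Set.mem_iUnion.mpr ⟨n + 1, Or.inr ⟨x, hn, b, hxb, hpos⟩⟩
    have hA0 : ∀ a, r₁ a ≠ 0 → a ∈ E := by
      intro a ha
      have hlt : fstMarg σ a < d₁ a := not_le.mp fun h => ha (tsub_eq_zero_of_le h)
      rw [hEdef]
      exact Set.mem_iUnion.mpr ⟨0, hlt⟩
    have e6 : evP d₁ E = evP (fstMarg σ) E + evP r₁ E := by
      rw [← evP_add]
      exact evP_congr_fun fun a _ => (add_tsub_cancel_of_le (hσ.1 a)).symm
    have e7 : evP r₁ E = mass r₁ := by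
      rw [evP, mass]
      refine tsum_congr fun a => ?_
      by_cases ha : a ∈ E
      · simp [Set.indicator, ha]
      · have : r₁ a = 0 := not_ne_iff.mp fun h => ha (hA0 a h)
        simp [Set.indicator, ha, this]
    have hD2F : evP d₂ F + mass r₁ ≤ evP d₁ E := by
      have e1 : evP d₂ F = evP (sndMarg σ) F := evP_congr_fun fun b hb => (hbF b hb).symm
      have e3 : evP σ (Set.univ ×ˢ F) = evP σ (E ×ˢ F) := by
        refine evP_congr_set fun p hp => ?_
        constructor
        · rintro ⟨-, hpF⟩
          exact ⟨hclosure p.1 p.2 hpF hp, hpF⟩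
        · rintro ⟨-, hpF⟩
          exact ⟨Set.mem_univ _, hpF⟩
      have e4 : evP σ (E ×ˢ F) ≤ evP σ (E ×ˢ Set.univ) :=
        evP_mono_set σ (Set.prod_mono_right (Set.subset_univ F))
      calc evP d₂ F + mass r₁ = evP σ (E ×ˢ F) + mass r₁ := by
            rw [e1, ← evP_prod_right, e3]
        _ ≤ evP (fstMarg σ) E + evP r₁ E := by
            rw [← evP_prod_left, e7]
            exact add_le_add_left e4 _
        _ = evP d₁ E := e6.symm
    have hDle : mass r₁ ≤ ε := by
      have hFfin : evP d₂ F ≠ ⊤ :=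
        ne_top_of_le_ne_top (by rw [h₂]; exact ENNReal.one_ne_top) (evP_le_mass d₂ F)
      refine ENNReal.le_of_add_le_add_left hFfin ?_
      refine le_trans hD2F ?_
      have := hyp E
      rw [← hFdef] at this
      exact this
    have hm1 : mass σ + mass r₁ = 1 := by
      rw [← h₁]
      have hcongr : ∀ a, d₁ a = fstMarg σ a + r₁ a := fun a =>
        (add_tsub_cancel_of_le (hσ.1 a)).symm
      calc mass σ + mass r₁ = (∑' a, fstMarg σ a) + ∑' a, r₁ a := by rw [mass_eq_fst]; rfl
        _ = ∑' a, (fstMarg σ a + r₁ a) := (ENNReal.tsum_add).symm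
        _ = ∑' a, d₁ a := tsum_congr fun a => (hcongr a).symm
        _ = mass d₁ := rfl
    have hm2 : mass σ + mass r₂ = 1 := by
      rw [← h₂]
      have hcongr : ∀ b, d₂ b = sndMarg σ b + r₂ b := fun b =>
        (add_tsub_cancel_of_le (hσ.2.1 b)).symm
      calc mass σ + mass r₂ = (∑' b, sndMarg σ b) + ∑' b, r₂ b := by rw [mass_eq_snd]; rfl
        _ = ∑' b, (sndMarg σ b + r₂ b) := (ENNReal.tsum_add).symm
        _ = ∑' b, d₂ b := tsum_congr fun b => (hcongr b).symm
        _ = mass d₂ := rfl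
    have hr2r1 : mass r₂ = mass r₁ :=
      ((ENNReal.add_right_inj hmtop).mp (hm2.trans hm1.symm))
    set D := mass r₁ with hDdef
    have hDfin : D ≠ ⊤ := by
      intro h
      rw [h, add_top] at hm1
      exact ENNReal.one_ne_top hm1.symm
    set μ := fun p : A × B => σ p + r₁ p.1 * r₂ p.2 / D with hμdef
    have hsum2 : (∑' b, r₂ b) = D := hr2r1
    have hsum1 : (∑' a, r₁ a) = D := rfl
    have hfstμ : ∀ a, fstMarg μ a = d₁ a := by
      intro a
      show (∑' b, (σ (a, b) + r₁ a * r₂ b / D)) = d₁ a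
      rw [ENNReal.tsum_add]
      have hinner : (∑' b, r₁ a * r₂ b / D) = r₁ a := by
        simp_rw [div_eq_mul_inv, mul_assoc]
        rw [ENNReal.tsum_mul_left, ENNReal.tsum_mul_right, hsum2]
        by_cases hD0 : D = 0
        · have h := le_mass r₁ a
          rw [← hDdef, hD0] at h
          have : r₁ a = 0 := le_antisymm h (zero_le)
          simp [this]
        · rw [ENNReal.mul_inv_cancel hD0 hDfin, mul_one]
      rw [hinner]
      exact add_tsub_cancel_of_le (hσ.1 a)
    have hsndμ : ∀ b, sndMarg μ b = d₂ b := by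
      intro b
      show (∑' a, (σ (a, b) + r₁ a * r₂ b / D)) = d₂ b
      rw [ENNReal.tsum_add]
      have hinner : (∑' a, r₁ a * r₂ b / D) = r₂ b := by
        simp_rw [div_eq_mul_inv]
        rw [ENNReal.tsum_mul_right, ENNReal.tsum_mul_right, hsum1]
        by_cases hD0 : D = 0
        · have h := le_mass r₂ b
          rw [hr2r1, hD0] at h
          have : r₂ b = 0 := le_antisymm h (zero_le)
          simp [this]
        · rw [mul_comm D (r₂ b), mul_assoc, ENNReal.mul_inv_cancel hD0 hDfin, mul_one]
      rw [hinner]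
      exact add_tsub_cancel_of_le (hσ.2.1 b)
    have hRc : evP μ Rᶜ ≤ D := by
      have hle : ∀ p, Rᶜ.indicator μ p ≤ r₁ p.1 * r₂ p.2 / D := by
        intro p
        by_cases hp : p ∈ Rᶜ
        · rw [Set.indicator_of_mem hp, hμdef]
          simp only [hσ.2.2 p hp, zero_add]
          exact le_rfl
        · rw [Set.indicator_of_notMem hp]
          exact zero_le
      calc evP μ Rᶜ ≤ ∑' p : A × B, r₁ p.1 * r₂ p.2 / D :=
            Summable.tsum_le_tsum hle ENNReal.summable ENNReal.summable
        _ = D * (D * D⁻¹) := by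
            simp_rw [div_eq_mul_inv]
            rw [ENNReal.tsum_prod']
            simp_rw [mul_assoc, ENNReal.tsum_mul_left]
            rw [ENNReal.tsum_mul_right, hsum1, ENNReal.tsum_mul_right, hsum2]
        _ ≤ D := by
            by_cases hD0 : D = 0
            · simp [hD0]
            · rw [ENNReal.mul_inv_cancel hD0 hDfin, mul_one]
    exact ⟨μ, ⟨funext hfstμ, funext hsndμ⟩, le_trans hRc hDle⟩
end
end

section
/- Gluing/closure of star-couplings under uniform bounds and pointwise limits: Let k ∈ [0,∞], f : A × B → [0,∞], and let (d_{1,n}) and (d_{2,n}) be sequences of discrete sub-distributions on countable sets A and B converging pointwise to d₁ and d₂. If for every n there exists a star-coupling μₙ of d_{1,n} and d_{2,n} with E_{μₙ}[f⋆] ≤ k, then there exists a star-coupling μ of d₁ and d₂ with E_μ[f⋆] ≤ k, where f⋆ extends f to A⋆ × B⋆ by value 0 whenever either argument is ⋆. -/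
open scoped ENNReal
open Filter

noncomputable section

/-- Helper: splitting a `tsum` over a product type. -/
private lemma tsum_prod_eq {α β : Type*} (g : α × β → ℝ≥0∞) :
    ∑' p, g p = ∑' x, ∑' y, g (x, y) := by
  calc ∑' p : α × β, g p = ∑' p : α × β, g (p.1, p.2) := tsum_congr fun p => rfl
  _ = _ := ENNReal.tsum_prod (f := fun x y => g (x, y))

/-- Helper: splitting a `tsum` over an option type. -/
private lemma tsum_option_eq {A : Type*} (f : Option A → ℝ≥0∞) :
    ∑' o, f o = f none + ∑' a, f (some a) := by
  classical
  have hsplit : ∀ o : Option A, f o =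
      (if o = none then f o else 0) + (if o = none then 0 else f o) := by
    intro o; by_cases h : o = none <;> simp [h]
  rw [tsum_congr hsplit, ENNReal.tsum_add]
  congr 1
  · rw [tsum_eq_sum (s := ({none} : Finset (Option A))) (by intro o ho; simp at ho; simp [ho])]
    simp
  · rw [← Function.Injective.tsum_eq (Option.some_injective A)
      (f := fun o => if o = none then 0 else f o) ?_]
    · exact tsum_congr fun a => by simp
    · intro o ho
      simp only [Function.mem_support] at ho
      rcases o with _ | a
      · simp at ho
      · exact ⟨a, rfl⟩

/-- Helper: tsum of pointwise truncated subtraction. -/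
private lemma tsum_sub_eq {ι : Type*} (f g : ι → ℝ≥0∞) (hle : ∀ i, g i ≤ f i)
    (hg : ∑' i, g i ≠ ∞) : ∑' i, (f i - g i) = ∑' i, f i - ∑' i, g i := by
  refine ENNReal.eq_sub_of_add_eq hg ?_
  rw [← ENNReal.tsum_add]
  exact tsum_congr fun i => tsub_add_cancel_of_le (hle i)

/-- Helper: the finite key inequality for star couplings. -/
private lemma key_finite {A B : Type*} (μ : Option A × Option B → ℝ≥0∞)
    (d₁ : A → ℝ≥0∞) (d₂ : B → ℝ≥0∞) (hm : mass μ = 1)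
    (h1 : ∀ a, fstMarg μ (some a) = d₁ a) (h2 : ∀ b, sndMarg μ (some b) = d₂ b)
    (F : Finset A) (G : Finset B) :
    ∑ a ∈ F, d₁ a + ∑ b ∈ G, d₂ b ≤ (∑ a ∈ F, ∑ b ∈ G, μ (some a, some b)) + 1 := by
  classical
  set F' := F.image (some : A → Option A) with hF'
  set G' := G.image (some : B → Option B) with hG'
  have hL1 : ∑ a ∈ F, d₁ a = ∑' x, ∑' y, (if x ∈ F' then μ (x, y) else 0) := by
    have hinner : ∀ x : Option A,
        (∑' y, (if x ∈ F' then μ (x, y) else 0)) = if x ∈ F' then fstMarg μ x else 0 := by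
      intro x; by_cases h : x ∈ F' <;> simp [h, fstMarg]
    rw [tsum_congr hinner, tsum_eq_sum (s := F') (by intro x hx; simp [hx])]
    rw [Finset.sum_ite_of_true (by intro x hx; exact hx), hF',
      Finset.sum_image (by intros; simp_all)]
    exact (Finset.sum_congr rfl fun a _ => (h1 a).symm)
  have hL2 : ∑ b ∈ G, d₂ b = ∑' x : Option A, ∑' y, (if y ∈ G' then μ (x, y) else 0) := by
    rw [ENNReal.tsum_comm]
    have hinner : ∀ y : Option B,
        (∑' x, (if y ∈ G' then μ (x, y) else 0)) = if y ∈ G' then sndMarg μ y else 0 := by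
      intro y; by_cases h : y ∈ G' <;> simp [h, sndMarg]
    rw [tsum_congr hinner, tsum_eq_sum (s := G') (by intro y hy; simp [hy])]
    rw [Finset.sum_ite_of_true (by intro y hy; exact hy), hG',
      Finset.sum_image (by intros; simp_all)]
    exact (Finset.sum_congr rfl fun b _ => (h2 b).symm)
  have hInt : (∑' x : Option A, ∑' y, (if x ∈ F' ∧ y ∈ G' then μ (x, y) else 0))
      = ∑ a ∈ F, ∑ b ∈ G, μ (some a, some b) := by
    have hinner : ∀ x : Option A,
        (∑' y, (if x ∈ F' ∧ y ∈ G' then μ (x, y) else 0))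
          = if x ∈ F' then ∑ b ∈ G, μ (x, some b) else 0 := by
      intro x; by_cases h : x ∈ F'
      · simp only [h, true_and, if_true]
        rw [tsum_eq_sum (s := G') (by intro y hy; simp [hy]), Finset.sum_ite_of_true
          (by intro y hy; exact hy), hG', Finset.sum_image (by intros; simp_all)]
      · simp [h]
    rw [tsum_congr hinner, tsum_eq_sum (s := F') (by intro x hx; simp [hx]),
      Finset.sum_ite_of_true (by intro x hx; exact hx), hF',
      Finset.sum_image (by intros; simp_all)]
  have hmass : (∑' x : Option A, ∑' y, μ (x, y)) = 1 := by
    rw [← tsum_prod_eq]; exact hm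
  calc ∑ a ∈ F, d₁ a + ∑ b ∈ G, d₂ b
      = ∑' x : Option A, ∑' y, ((if x ∈ F' then μ (x, y) else 0)
          + (if y ∈ G' then μ (x, y) else 0)) := by
        rw [hL1, hL2]
        simp_rw [ENNReal.tsum_add]
    _ ≤ ∑' x : Option A, ∑' y, ((if x ∈ F' ∧ y ∈ G' then μ (x, y) else 0) + μ (x, y)) := by
        refine ENNReal.tsum_le_tsum fun x => ENNReal.tsum_le_tsum fun y => ?_
        by_cases hx : x ∈ F' <;> by_cases hy : y ∈ G' <;> simp [hx, hy]
    _ = (∑ a ∈ F, ∑ b ∈ G, μ (some a, some b)) + 1 := by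
        simp_rw [ENNReal.tsum_add]
        rw [hInt, hmass]

/-- The repaired limit coupling. -/
private def glue {A B : Type*} (ν : Option A × Option B → ℝ≥0∞)
    (d₁ : A → ℝ≥0∞) (d₂ : B → ℝ≥0∞) (z : ℝ≥0∞) : Option A × Option B → ℝ≥0∞
  | (some a, some b) => ν (some a, some b)
  | (some a, none) => d₁ a - ∑' b, ν (some a, some b)
  | (none, some b) => d₂ b - ∑' a, ν (some a, some b)
  | (none, none) => z

/-- ⋆-couplings with a uniform expectation bound pass to pointwise limits. -/
theorem starCoupling_limit {A B : Type*} [Countable A] [Countable B]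
    (k : ℝ≥0∞) (f : A × B → ℝ≥0∞)
    (d₁ : ℕ → A → ℝ≥0∞) (d₂ : ℕ → B → ℝ≥0∞) (d₁lim : A → ℝ≥0∞) (d₂lim : B → ℝ≥0∞)
    (hsub₁ : ∀ n, IsSubDist (d₁ n)) (hsub₂ : ∀ n, IsSubDist (d₂ n))
    (hconv₁ : ∀ a, Tendsto (fun n => d₁ n a) atTop (nhds (d₁lim a)))
    (hconv₂ : ∀ b, Tendsto (fun n => d₂ n b) atTop (nhds (d₂lim b)))
    (h : ∀ n, ∃ μ : Option A × Option B → ℝ≥0∞,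
      IsStarCoupling μ (d₁ n) (d₂ n) ∧ expec μ (fstar f) ≤ k) :
    ∃ μ : Option A × Option B → ℝ≥0∞,
      IsStarCoupling μ d₁lim d₂lim ∧ expec μ (fstar f) ≤ k := by
  classical
  choose μs hcoup hk using h
  obtain ⟨ν, φ, hφ, hconvν⟩ := CompactSpace.tendsto_subseq μs
  have hpt : ∀ p, Tendsto (fun n => μs (φ n) p) atTop (nhds (ν p)) :=
    fun p => tendsto_pi_nhds.mp hconvν p
  have hφt : Tendsto φ atTop atTop := hφ.tendsto_atTop
  have hd1 : ∀ a, Tendsto (fun n => d₁ (φ n) a) atTop (nhds (d₁lim a)) :=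
    fun a => (hconv₁ a).comp hφt
  have hd2 : ∀ b, Tendsto (fun n => d₂ (φ n) b) atTop (nhds (d₂lim b)) :=
    fun b => (hconv₂ b).comp hφt
  have hc1 : ∀ n a, fstMarg (μs n) (some a) = d₁ n a := fun n a => by
    rw [(hcoup n).2.1]; rfl
  have hc2 : ∀ n b, sndMarg (μs n) (some b) = d₂ n b := fun n b => by
    rw [(hcoup n).2.2]; rfl
  have hmassn : ∀ n, mass (μs n) = 1 := fun n => (hcoup n).1
  -- interior quantities
  have hrow : ∀ a, (∑' b, ν (some a, some b)) ≤ d₁lim a := by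
    intro a
    rw [ENNReal.tsum_eq_iSup_sum]
    refine iSup_le fun G => ?_
    refine le_of_tendsto_of_tendsto'
      (tendsto_finset_sum G fun b _ => hpt (some a, some b)) (hd1 a) fun n => ?_
    rw [← hc1 (φ n) a]
    calc ∑ b ∈ G, μs (φ n) (some a, some b)
        ≤ ∑' b, μs (φ n) (some a, some b) := ENNReal.sum_le_tsum G
      _ ≤ ∑' y, μs (φ n) (some a, y) := by
          rw [tsum_option_eq]; exact le_add_self
  have hcol : ∀ b, (∑' a, ν (some a, some b)) ≤ d₂lim b := by
    intro b
    rw [ENNReal.tsum_eq_iSup_sum]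
    refine iSup_le fun F => ?_
    refine le_of_tendsto_of_tendsto'
      (tendsto_finset_sum F fun a _ => hpt (some a, some b)) (hd2 b) fun n => ?_
    rw [← hc2 (φ n) b]
    calc ∑ a ∈ F, μs (φ n) (some a, some b)
        ≤ ∑' a, μs (φ n) (some a, some b) := ENNReal.sum_le_tsum F
      _ ≤ ∑' x, μs (φ n) (x, some b) := by
          rw [tsum_option_eq]; exact le_add_self
  have hm1 : mass d₁lim ≤ 1 := by
    rw [mass, ENNReal.tsum_eq_iSup_sum]
    refine iSup_le fun F => ?_
    refine le_of_tendsto (tendsto_finset_sum F fun a _ => hd1 a)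
      (Eventually.of_forall fun n => ?_)
    exact le_trans (ENNReal.sum_le_tsum F) (hsub₁ (φ n))
  have hm2 : mass d₂lim ≤ 1 := by
    rw [mass, ENNReal.tsum_eq_iSup_sum]
    refine iSup_le fun G => ?_
    refine le_of_tendsto (tendsto_finset_sum G fun b _ => hd2 b)
      (Eventually.of_forall fun n => ?_)
    exact le_trans (ENNReal.sum_le_tsum G) (hsub₂ (φ n))
  have hm1top : mass d₁lim ≠ ∞ := ne_top_of_le_ne_top ENNReal.one_ne_top hm1
  have hm2top : mass d₂lim ≠ ∞ := ne_top_of_le_ne_top ENNReal.one_ne_top hm2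
  set I : ℝ≥0∞ := ∑' (p : A × B), ν (some p.1, some p.2) with hI_def
  have hIdouble : I = ∑' a, ∑' b, ν (some a, some b) :=
    tsum_prod_eq fun p => ν (some p.1, some p.2)
  have hIdouble' : I = ∑' b, ∑' a, ν (some a, some b) := by
    rw [hIdouble]; exact ENNReal.tsum_comm
  have hIle1 : I ≤ mass d₁lim := by
    rw [hIdouble]; exact ENNReal.tsum_le_tsum hrow
  have hIle2 : I ≤ mass d₂lim := by
    rw [hIdouble']; exact ENNReal.tsum_le_tsum hcol
  have hItop : I ≠ ∞ := ne_top_of_le_ne_top hm1top hIle1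
  -- key inequality
  have hkey : mass d₁lim + mass d₂lim ≤ 1 + I := by
    rw [show mass d₁lim = ⨆ F : Finset A, ∑ a ∈ F, d₁lim a from ENNReal.tsum_eq_iSup_sum,
        show mass d₂lim = ⨆ G : Finset B, ∑ b ∈ G, d₂lim b from ENNReal.tsum_eq_iSup_sum]
    refine ENNReal.iSup_add_iSup_le fun F G => ?_
    have hFG : (∑ a ∈ F, ∑ b ∈ G, ν (some a, some b)) ≤ I := by
      rw [hIdouble]
      refine le_trans (Finset.sum_le_sum fun a _ => ENNReal.sum_le_tsum G) ?_
      exact ENNReal.sum_le_tsum F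
    refine le_trans (le_of_tendsto_of_tendsto'
      ((tendsto_finset_sum F fun a _ => hd1 a).add (tendsto_finset_sum G fun b _ => hd2 b))
      (((tendsto_finset_sum F fun a _ =>
          tendsto_finset_sum G fun b _ => hpt (some a, some b))).add tendsto_const_nhds)
      (fun n => key_finite (μs (φ n)) (d₁ (φ n)) (d₂ (φ n)) (hmassn (φ n))
        (hc1 (φ n)) (hc2 (φ n)) F G)) ?_
    rw [add_comm (1 : ℝ≥0∞) I]
    exact add_le_add_left hFG 1
  have hv : mass d₂lim - I ≤ 1 - mass d₁lim := by
    rw [tsub_le_iff_right]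
    have h1' : (1 : ℝ≥0∞) - mass d₁lim + I + mass d₁lim = 1 + I := by
      rw [add_right_comm, tsub_add_cancel_of_le hm1]
    have hkey' : mass d₁lim + mass d₂lim ≤ mass d₁lim + (1 - mass d₁lim + I) := by
      rw [add_comm (mass d₁lim) (1 - mass d₁lim + I), h1']
      exact hkey
    exact (ENNReal.add_le_add_iff_left hm1top).mp hkey'
  have hu : mass d₁lim - I ≤ 1 - mass d₂lim := by
    rw [tsub_le_iff_right]
    have h1' : (1 : ℝ≥0∞) - mass d₂lim + I + mass d₂lim = 1 + I := by
      rw [add_right_comm, tsub_add_cancel_of_le hm2]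
    have hkey' : mass d₂lim + mass d₁lim ≤ mass d₂lim + (1 - mass d₂lim + I) := by
      rw [add_comm (mass d₂lim) (1 - mass d₂lim + I), h1', add_comm (mass d₂lim)]
      exact hkey
    exact (ENNReal.add_le_add_iff_left hm2top).mp hkey'
  set z : ℝ≥0∞ := 1 - mass d₁lim - (mass d₂lim - I) with hz_def
  have hz' : z = 1 - mass d₂lim - (mass d₁lim - I) := by
    have hswap : mass d₁lim + (mass d₂lim - I) = mass d₂lim + (mass d₁lim - I) := by
      have e1 : mass d₁lim + (mass d₂lim - I) + I = mass d₂lim + (mass d₁lim - I) + I := by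
        rw [add_assoc, add_assoc, tsub_add_cancel_of_le hIle2, tsub_add_cancel_of_le hIle1,
          add_comm]
      calc mass d₁lim + (mass d₂lim - I)
          = mass d₁lim + (mass d₂lim - I) + I - I := (ENNReal.add_sub_cancel_right hItop).symm
        _ = mass d₂lim + (mass d₁lim - I) + I - I := by rw [e1]
        _ = mass d₂lim + (mass d₁lim - I) := ENNReal.add_sub_cancel_right hItop
    rw [hz_def, tsub_tsub, tsub_tsub, hswap]
  -- row/column sums of the glued coupling
  have hrowsum : ∀ a, (∑' y, glue ν d₁lim d₂lim z (some a, y)) = d₁lim a := by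
    intro a
    rw [tsum_option_eq]
    show (d₁lim a - ∑' b, ν (some a, some b)) + ∑' b, ν (some a, some b) = d₁lim a
    exact tsub_add_cancel_of_le (hrow a)
  have hcolsub : (∑' b, (d₂lim b - ∑' a, ν (some a, some b))) = mass d₂lim - I := by
    rw [tsum_sub_eq _ _ hcol (by rw [← hIdouble']; exact hItop), ← hIdouble']
    rfl
  have hrowsub : (∑' a, (d₁lim a - ∑' b, ν (some a, some b))) = mass d₁lim - I := by
    rw [tsum_sub_eq _ _ hrow (by rw [← hIdouble]; exact hItop), ← hIdouble]
    rfl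
  have hnonerow : (∑' y, glue ν d₁lim d₂lim z (none, y)) = 1 - mass d₁lim := by
    rw [tsum_option_eq]
    show z + (∑' b, (d₂lim b - ∑' a, ν (some a, some b))) = 1 - mass d₁lim
    rw [hcolsub, hz_def]
    exact tsub_add_cancel_of_le hv
  have hfst : fstMarg (glue ν d₁lim d₂lim z) = starExt d₁lim := by
    funext x
    cases x with
    | none => exact hnonerow
    | some a => exact hrowsum a
  have hcolsum : ∀ b, (∑' x, glue ν d₁lim d₂lim z (x, some b)) = d₂lim b := by
    intro b
    rw [tsum_option_eq]
    show (d₂lim b - ∑' a, ν (some a, some b)) + ∑' a, ν (some a, some b) = d₂lim b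
    exact tsub_add_cancel_of_le (hcol b)
  have hnonecol : (∑' x, glue ν d₁lim d₂lim z (x, none)) = 1 - mass d₂lim := by
    rw [tsum_option_eq]
    show z + (∑' a, (d₁lim a - ∑' b, ν (some a, some b))) = 1 - mass d₂lim
    rw [hrowsub, hz']
    exact tsub_add_cancel_of_le hu
  have hsnd : sndMarg (glue ν d₁lim d₂lim z) = starExt d₂lim := by
    funext y
    cases y with
    | none => exact hnonecol
    | some b => exact hcolsum b
  have hmassg : mass (glue ν d₁lim d₂lim z) = 1 := by
    rw [mass, tsum_prod_eq, tsum_option_eq]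
    rw [hnonerow, tsum_congr hrowsum]
    exact tsub_add_cancel_of_le hm1
  refine ⟨glue ν d₁lim d₂lim z, ⟨hmassg, hfst, hsnd⟩, ?_⟩
  -- expectation bound
  by_cases hpath : ∃ p, fstar f p = ∞ ∧ ν p ≠ 0
  · obtain ⟨p, hpinf, hpν⟩ := hpath
    have hopen : {x : ℝ≥0∞ | x ≠ 0} ∈ nhds (ν p) := isOpen_compl_singleton.mem_nhds hpν
    have he : ∀ᶠ n in atTop, μs (φ n) p ≠ 0 := (hpt p).eventually hopen
    obtain ⟨n, hn⟩ := he.exists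
    have hinf : expec (μs (φ n)) (fstar f) = ∞ := by
      refine top_unique ?_
      calc (⊤ : ℝ≥0∞) = μs (φ n) p * fstar f p := by rw [hpinf, ENNReal.mul_top hn]
        _ ≤ ∑' q, μs (φ n) q * fstar f q := ENNReal.le_tsum p
    have hktop : k = ∞ := top_unique (hinf ▸ hk (φ n))
    rw [hktop]; exact le_top
  · push_neg at hpath
    have heq : expec (glue ν d₁lim d₂lim z) (fstar f) = expec ν (fstar f) := by
      refine tsum_congr fun p => ?_
      rcases p with ⟨x | a, y | b⟩
      · simp [glue, fstar]
      · simp [glue, fstar]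
      · simp [glue, fstar]
      · rfl
    rw [heq, expec, ENNReal.tsum_eq_iSup_sum]
    refine iSup_le fun S => ?_
    have hsub : ∑ p ∈ S.filter (fun p => ν p ≠ 0), ν p * fstar f p
        = ∑ p ∈ S, ν p * fstar f p := by
      refine Finset.sum_filter_of_ne fun p _ hne => ?_
      intro h0
      exact hne (by rw [h0, zero_mul])
    rw [← hsub]
    have hlim : Tendsto
        (fun n => ∑ p ∈ S.filter (fun p => ν p ≠ 0), μs (φ n) p * fstar f p) atTop
        (nhds (∑ p ∈ S.filter (fun p => ν p ≠ 0), ν p * fstar f p)) := by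
      refine tendsto_finset_sum _ fun p hp => ?_
      have hν0 : ν p ≠ 0 := (Finset.mem_filter.mp hp).2
      have hftop : fstar f p ≠ ∞ := fun hc => hν0 (hpath p hc)
      exact ENNReal.Tendsto.mul_const (hpt p) (Or.inr hftop)
    refine le_of_tendsto hlim (Eventually.of_forall fun n => ?_)
    exact le_trans (ENNReal.sum_le_tsum _) (hk (φ n))
end
end

section
/- Existence of an optimal coupling (discrete case): let d₁ and d₂ be two discrete sub-distributions with countable support and the same total mass, and let E : A × A → [0,∞]. Then there exists a coupling μ of d₁ and d₂ such that E_μ[E] = inf over all couplings ν of d₁ and d₂ of E_ν[E]; i.e., the infimum over couplings of the expected cost is attained. -/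
open scoped ENNReal
open Filter Topology

noncomputable section

-- two-term liminf superadditivity in ℝ≥0∞
lemma ennreal_le_liminf_add {α : Type*} {f : Filter α} {u v : α → ℝ≥0∞} :
    liminf u f + liminf v f ≤ liminf (fun n => u n + v n) f := by
  rcases eq_or_ne (liminf u f) 0 with h | hu0
  · rw [h, zero_add]
    exact liminf_le_liminf (Eventually.of_forall fun n => le_add_self)
  rcases eq_or_ne (liminf v f) 0 with h | hv0
  · rw [h, add_zero]
    exact liminf_le_liminf (Eventually.of_forall fun n => le_self_add)
  refine (le_liminf_iff (by isBoundedDefault) (by isBoundedDefault)).2 fun b hb => ?_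
  obtain ⟨y', hy', z', hz', hb'⟩ := ENNReal.exists_lt_add_of_lt_add hb hu0 hv0
  filter_upwards [eventually_lt_of_lt_liminf hy', eventually_lt_of_lt_liminf hz'] with n h1 h2
  exact hb'.trans_le (add_le_add h1.le h2.le)

-- finite sums of liminfs
lemma ennreal_sum_liminf_le {ι α : Type*} {f : Filter α} (F : Finset ι) (g : ι → α → ℝ≥0∞) :
    ∑ i ∈ F, liminf (g i) f ≤ liminf (fun n => ∑ i ∈ F, g i n) f := by
  classical
  induction F using Finset.induction with
  | empty => simp
  | @insert a s h ih =>
    rw [Finset.sum_insert h]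
    calc liminf (g a) f + ∑ i ∈ s, liminf (g i) f
        ≤ liminf (g a) f + liminf (fun n => ∑ i ∈ s, g i n) f := by gcongr
      _ ≤ liminf (fun n => g a n + ∑ i ∈ s, g i n) f := ennreal_le_liminf_add
      _ = liminf (fun n => ∑ i ∈ insert a s, g i n) f := by
          simp [Finset.sum_insert h]

-- tail bound
lemma exists_finset_tail_le {B : Type*} (d : B → ℝ≥0∞) (hd : (∑' b, d b) ≠ ∞)
    {ε : ℝ≥0∞} (hε : ε ≠ 0) :
    ∃ F : Finset B, (∑' b : ↑((↑F : Set B)ᶜ), d b.1) ≤ ε := by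
  by_cases h0 : (∑' b, d b) = 0
  · refine ⟨∅, le_trans ?_ (le_trans h0.le zero_le)⟩
    exact ENNReal.tsum_comp_le_tsum_of_injective Subtype.val_injective d
  · have h1 : (∑' b, d b) - ε < ⨆ F : Finset B, ∑ b ∈ F, d b := by
      rw [← ENNReal.tsum_eq_iSup_sum]
      exact ENNReal.sub_lt_self hd h0 hε
    obtain ⟨F, hF⟩ := lt_iSup_iff.mp h1
    refine ⟨F, ?_⟩
    have key : (∑' b : (↑F : Set B), d b.1) + (∑' b : ↑((↑F : Set B)ᶜ), d b.1) = ∑' b, d b :=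
      Summable.tsum_add_tsum_compl (s := (↑F : Set B)) (f := d) ENNReal.summable ENNReal.summable
    have hFs : (∑' b : (↑F : Set B), d b.1) = ∑ b ∈ F, d b := Finset.tsum_subtype' F d
    have hFne : (∑ b ∈ F, d b) ≠ ∞ := (lt_of_le_of_lt (ENNReal.sum_le_tsum F) hd.lt_top).ne
    have h2 : (∑' b, d b) ≤ (∑ b ∈ F, d b) + ε := tsub_le_iff_right.mp hF.le
    have h3 : (∑' b : ↑((↑F : Set B)ᶜ), d b.1) + (∑ b ∈ F, d b) ≤ ε + (∑ b ∈ F, d b) := by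
      calc (∑' b : ↑((↑F : Set B)ᶜ), d b.1) + (∑ b ∈ F, d b)
          = ∑' b, d b := by rw [add_comm, ← hFs, key]
        _ ≤ (∑ b ∈ F, d b) + ε := h2
        _ = ε + (∑ b ∈ F, d b) := add_comm _ _
    exact (ENNReal.add_le_add_iff_right hFne).mp h3

-- limit of couplings has the right first marginal
lemma fstMarg_limit {A B : Type*} {d₁ : A → ℝ≥0∞} {d₂ : B → ℝ≥0∞}
    (hd₂ : (∑' b, d₂ b) ≠ ∞)
    {ν : ℕ → A × B → ℝ≥0∞}
    (hf : ∀ n, fstMarg (ν n) = d₁) (hs : ∀ n, sndMarg (ν n) = d₂)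
    {μ : A × B → ℝ≥0∞}
    (hconv : ∀ x, Tendsto (fun n => ν n x) atTop (𝓝 (μ x))) :
    fstMarg μ = d₁ := by
  funext a
  apply le_antisymm
  · show (∑' b, μ (a, b)) ≤ d₁ a
    rw [ENNReal.tsum_eq_iSup_sum]
    refine iSup_le fun F => ?_
    refine le_of_tendsto (tendsto_finset_sum F fun b _ => hconv (a, b))
      (Eventually.of_forall fun n => ?_)
    calc ∑ b ∈ F, ν n (a, b) ≤ ∑' b, ν n (a, b) := ENNReal.sum_le_tsum F
      _ = d₁ a := congrFun (hf n) a
  · refine ENNReal.le_of_forall_pos_le_add fun ε hε _ => ?_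
    obtain ⟨F, hF⟩ := exists_finset_tail_le d₂ hd₂ (ε := (ε : ℝ≥0∞))
      (by exact_mod_cast hε.ne')
    have hterm : ∀ n, d₁ a ≤ (∑ b ∈ F, ν n (a, b)) + ε := by
      intro n
      have key : (∑' b : (↑F : Set B), ν n (a, b.1)) + (∑' b : ↑((↑F : Set B)ᶜ), ν n (a, b.1))
          = ∑' b, ν n (a, b) :=
        Summable.tsum_add_tsum_compl (s := (↑F : Set B)) (f := fun b => ν n (a, b))
          ENNReal.summable ENNReal.summable
      have hFs : (∑' b : (↑F : Set B), ν n (a, b.1)) = ∑ b ∈ F, ν n (a, b) :=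
        Finset.tsum_subtype' F (fun b => ν n (a, b))
      have htail : (∑' b : ↑((↑F : Set B)ᶜ), ν n (a, b.1)) ≤ (∑' b : ↑((↑F : Set B)ᶜ), d₂ b.1) := by
        refine ENNReal.tsum_le_tsum fun b => ?_
        calc ν n (a, b.1) ≤ ∑' a', ν n (a', b.1) := ENNReal.le_tsum a
          _ = d₂ b.1 := congrFun (hs n) b.1
      calc d₁ a = ∑' b, ν n (a, b) := (congrFun (hf n) a).symm
        _ = (∑ b ∈ F, ν n (a, b)) + (∑' b : ↑((↑F : Set B)ᶜ), ν n (a, b.1)) := by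
            rw [← hFs, key]
        _ ≤ (∑ b ∈ F, ν n (a, b)) + ε := by
            exact add_le_add_right (le_trans htail hF) _
    have hlim : Tendsto (fun n => (∑ b ∈ F, ν n (a, b)) + (ε : ℝ≥0∞)) atTop
        (𝓝 ((∑ b ∈ F, μ (a, b)) + ε)) :=
      Tendsto.add (tendsto_finset_sum F fun b _ => hconv (a, b)) tendsto_const_nhds
    have h4 : d₁ a ≤ (∑ b ∈ F, μ (a, b)) + ε :=
      ge_of_tendsto hlim (Eventually.of_forall hterm)
    exact h4.trans (add_le_add_left (ENNReal.sum_le_tsum F) _)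

/-- existence of an optimal coupling (the infimum of expected cost is attained). -/
theorem optimal_coupling_exists {A : Type*} [Countable A]
    (d₁ d₂ : A → ℝ≥0∞) (h₁ : IsSubDist d₁) (h₂ : IsSubDist d₂)
    (hm : mass d₁ = mass d₂) (c : A × A → ℝ≥0∞) :
    ∃ μ : A × A → ℝ≥0∞, IsCoupling μ d₁ d₂ ∧
      expec μ c = ⨅ ν : {ν : A × A → ℝ≥0∞ // IsCoupling ν d₁ d₂}, expec ν.1 c := by
  classical
  set m := ⨅ ν : {ν : A × A → ℝ≥0∞ // IsCoupling ν d₁ d₂}, expec ν.1 c with hm_def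
  have hd₁ : mass d₁ ≠ ∞ := (lt_of_le_of_lt h₁ ENNReal.one_lt_top).ne
  have hd₂ : mass d₂ ≠ ∞ := (lt_of_le_of_lt h₂ ENNReal.one_lt_top).ne
  -- a coupling exists
  obtain ⟨ν₀, hν₀⟩ : ∃ ν, IsCoupling ν d₁ d₂ := by
    by_cases hM : mass d₁ = 0
    · have hd1z : d₁ = 0 := by
        funext a
        exact le_antisymm (le_trans (ENNReal.le_tsum a) hM.le) zero_le
      have hd2z : d₂ = 0 := by
        funext b
        exact le_antisymm (le_trans (ENNReal.le_tsum b) (hm ▸ hM).le) zero_le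
      refine ⟨0, ?_, ?_⟩
      · funext a
        show (∑' b, (0 : ℝ≥0∞)) = d₁ a
        simp [hd1z]
      · funext b
        show (∑' a, (0 : ℝ≥0∞)) = d₂ b
        simp [hd2z]
    · refine ⟨fun p => d₁ p.1 * (d₂ p.2 * (mass d₁)⁻¹), ?_, ?_⟩
      · funext a
        show (∑' b, d₁ a * (d₂ b * (mass d₁)⁻¹)) = d₁ a
        rw [ENNReal.tsum_mul_left, ENNReal.tsum_mul_right]
        rw [show (∑' b, d₂ b) = mass d₂ from rfl, ← hm,
          ENNReal.mul_inv_cancel hM hd₁, mul_one]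
      · funext b
        show (∑' a, d₁ a * (d₂ b * (mass d₁)⁻¹)) = d₂ b
        rw [ENNReal.tsum_mul_right]
        rw [show (∑' a, d₁ a) = mass d₁ from rfl, mul_comm (d₂ b) (mass d₁)⁻¹,
          ← mul_assoc, ENNReal.mul_inv_cancel hM hd₁, one_mul]
  by_cases hminf : m = ∞
  · exact ⟨ν₀, hν₀, le_antisymm (hminf ▸ le_top) (iInf_le _ (⟨ν₀, hν₀⟩ : {ν : A × A → ℝ≥0∞ // IsCoupling ν d₁ d₂}))⟩
  -- a minimizing sequence
  have hseq : ∀ n : ℕ, ∃ ν : {ν : A × A → ℝ≥0∞ // IsCoupling ν d₁ d₂},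
      expec ν.1 c < m + ((n : ℝ≥0∞) + 1)⁻¹ := by
    intro n
    have hpos : ((n : ℝ≥0∞) + 1)⁻¹ ≠ 0 :=
      ENNReal.inv_ne_zero.mpr (ENNReal.add_ne_top.mpr ⟨ENNReal.natCast_ne_top n, ENNReal.one_ne_top⟩)
    exact iInf_lt_iff.mp (ENNReal.lt_add_right hminf hpos)
  choose ν hν using hseq
  have hlb : ∀ n, m ≤ expec (ν n).1 c := fun n => iInf_le _ (ν n)
  have htend : Tendsto (fun n => expec (ν n).1 c) atTop (𝓝 m) := by
    have h0 : Tendsto (fun n : ℕ => ((n : ℝ≥0∞) + 1)⁻¹) atTop (𝓝 0) := by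
      have := ENNReal.tendsto_inv_nat_nhds_zero.comp (tendsto_add_atTop_nat 1)
      convert this using 2 with n
      simp [Function.comp]
    have h1 : Tendsto (fun n : ℕ => m + ((n : ℝ≥0∞) + 1)⁻¹) atTop (𝓝 m) := by
      have := Tendsto.add (tendsto_const_nhds (x := m) (f := (atTop : Filter ℕ))) h0
      simpa using this
    exact tendsto_of_tendsto_of_tendsto_of_le_of_le tendsto_const_nhds h1 hlb
      (fun n => (hν n).le)
  -- extract a convergent subsequence
  obtain ⟨μ, φ, hφ, hconv⟩ := CompactSpace.tendsto_subseq (fun n => (ν n).1)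
  have hpt : ∀ x : A × A, Tendsto (fun n => (ν (φ n)).1 x) atTop (𝓝 (μ x)) := by
    intro x
    exact (tendsto_pi_nhds.mp hconv) x
  have hcoup : IsCoupling μ d₁ d₂ := by
    constructor
    · exact fstMarg_limit hd₂ (fun n => ((ν (φ n)).2).1) (fun n => ((ν (φ n)).2).2) hpt
    · have : fstMarg (fun p : A × A => μ (p.2, p.1)) = d₂ := by
        refine fstMarg_limit (d₂ := d₁) hd₁ (ν := fun n => fun p : A × A => (ν (φ n)).1 (p.2, p.1))
          (fun n => ?_) (fun n => ?_) (fun x => hpt (x.2, x.1))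
        · exact ((ν (φ n)).2).2
        · exact ((ν (φ n)).2).1
      exact this
  have hmintend : Tendsto (fun n => expec (ν (φ n)).1 c) atTop (𝓝 m) :=
    htend.comp hφ.tendsto_atTop
  have hexp_le : expec μ c ≤ m := by
    rw [expec, ENNReal.tsum_eq_iSup_sum]
    refine iSup_le fun F => ?_
    have hterm : ∀ x ∈ F, μ x * c x ≤ liminf (fun n => (ν (φ n)).1 x * c x) atTop := by
      intro x _
      have h1 : liminf (fun n => (ν (φ n)).1 x) atTop = μ x := (hpt x).liminf_eq
      calc μ x * c x
          = liminf (fun n => (ν (φ n)).1 x) atTop * liminf (fun _ : ℕ => c x) atTop := by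
            rw [h1, liminf_const]
        _ ≤ liminf ((fun n => (ν (φ n)).1 x) * fun _ => c x) atTop := ENNReal.le_liminf_mul
        _ = liminf (fun n => (ν (φ n)).1 x * c x) atTop := rfl
    calc ∑ x ∈ F, μ x * c x
        ≤ ∑ x ∈ F, liminf (fun n => (ν (φ n)).1 x * c x) atTop := Finset.sum_le_sum hterm
      _ ≤ liminf (fun n => ∑ x ∈ F, (ν (φ n)).1 x * c x) atTop :=
          ennreal_sum_liminf_le F _
      _ ≤ liminf (fun n => expec (ν (φ n)).1 c) atTop :=
          liminf_le_liminf (Eventually.of_forall fun n => ENNReal.sum_le_tsum F)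
      _ = m := hmintend.liminf_eq
  exact ⟨μ, hcoup, le_antisymm hexp_le (iInf_le _ (⟨μ, hcoup⟩ : {ν : A × A → ℝ≥0∞ // IsCoupling ν d₁ d₂}))⟩
end
end

section
/- Validity is antitone in the output sub-distributions: if μ₂ is a star-coupling of sub-distributions d₁' and d₂' with E_{μ₂}[g⋆] ≥ E bound, and d₁ ≤ d₁', d₂ ≤ d₂' pointwise (as sub-distributions), then there exists a star-coupling μ₁ of d₁ and d₂ with E_{μ₁}[g⋆] ≤ E_{μ₂}[g⋆], where g⋆ is the extension of a nonnegative function g by 0 on pairs involving ⋆. In particular, for any k, if some star-coupling of d₁' and d₂' has expected g⋆ at most k, then so does some star-coupling of d₁ and d₂. -/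
open scoped ENNReal
open Filter

noncomputable section

lemma tsum_option_ennreal {α : Type*} (f : Option α → ℝ≥0∞) :
    ∑' x, f x = f none + ∑' a, f (some a) := by
  have key : ∀ x : Option α, f x =
      Option.elim x (f none) (fun _ => 0) + Option.elim x 0 (fun a => f (some a)) := by
    rintro (_ | a) <;> simp
  rw [tsum_congr key, ENNReal.tsum_add]
  congr 1
  · refine tsum_eq_single none ?_
    rintro (_ | a) h
    · exact absurd rfl h
    · rfl
  · exact ((Option.some_injective α).tsum_eq
      (f := fun x : Option α => Option.elim x 0 (fun a => f (some a)))
      (by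
        rintro (_ | a) hx
        · simp at hx
        · exact ⟨a, rfl⟩)).symm

/-- Key one-sided step: shrink the first marginal from `d₁'` to `d₁`. -/
lemma step {A B : Type*} (d₁ d₁' : A → ℝ≥0∞) (d₂' : B → ℝ≥0∞)
    (h₁' : IsSubDist d₁') (hle : ∀ a, d₁ a ≤ d₁' a)
    (μ : Option A × Option B → ℝ≥0∞) (h : IsStarCoupling μ d₁' d₂') :
    ∃ ν : Option A × Option B → ℝ≥0∞, IsStarCoupling ν d₁ d₂' ∧
      ∀ a b, ν (some a, some b) ≤ μ (some a, some b) := by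
  obtain ⟨hm, hf, hs⟩ := h
  set r : A → ℝ≥0∞ := fun a => d₁ a / d₁' a with hr_def
  have hd₁'top : ∀ a, d₁' a ≠ ∞ := by
    intro a
    have : d₁' a ≤ mass d₁' := ENNReal.le_tsum a
    exact ne_top_of_le_ne_top (by simp) (this.trans h₁')
  have hr1 : ∀ a, r a ≤ 1 := fun a =>
    (ENNReal.div_le_div_right (hle a) _).trans ENNReal.div_self_le_one
  classical
  refine ⟨fun p => match p with
    | (some a, y) => μ (some a, y) * r a
    | (none, y) => μ (none, y) + ∑' a, μ (some a, y) * (1 - r a), ?_, ?_⟩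
  · set ν : Option A × Option B → ℝ≥0∞ := fun p => match p with
      | (some a, y) => μ (some a, y) * r a
      | (none, y) => μ (none, y) + ∑' a, μ (some a, y) * (1 - r a) with hν
    -- second marginal is preserved
    have hcol : ∀ y, sndMarg ν y = sndMarg μ y := by
      intro y
      have : sndMarg ν y = ν (none, y) + ∑' a, ν (some a, y) :=
        tsum_option_ennreal _
      rw [this]
      show μ (none, y) + (∑' a, μ (some a, y) * (1 - r a)) +
          ∑' a, μ (some a, y) * r a = _
      rw [add_assoc, ← ENNReal.tsum_add]
      have : ∀ a, μ (some a, y) * (1 - r a) + μ (some a, y) * r a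
          = μ (some a, y) := by
        intro a
        rw [← mul_add, tsub_add_cancel_of_le (hr1 a), mul_one]
      rw [tsum_congr this]
      exact (tsum_option_ennreal fun x => μ (x, y)).symm
    -- first marginal on `some a`
    have hrow : ∀ a, fstMarg ν (some a) = d₁ a := by
      intro a
      show (∑' y, μ (some a, y) * r a) = d₁ a
      rw [ENNReal.tsum_mul_right]
      have : (∑' y, μ (some a, y)) = d₁' a := by
        have := congrFun hf (some a); exact this
      rw [this]
      rcases eq_or_ne (d₁' a) 0 with h0 | h0
      · have : d₁ a = 0 := le_antisymm (h0 ▸ hle a) zero_le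
        simp [h0, this]
      · rw [mul_comm]
        exact ENNReal.div_mul_cancel h0 (hd₁'top a)
    have hsnd : sndMarg ν = starExt d₂' := by
      funext y; rw [hcol y]; exact congrFun hs y
    -- total mass
    have hmass : mass ν = 1 := by
      have h1 : mass ν = ∑' y, sndMarg ν y := by
        rw [mass, ENNReal.tsum_prod', ENNReal.tsum_comm]; rfl
      have h2 : mass μ = ∑' y, sndMarg μ y := by
        rw [mass, ENNReal.tsum_prod', ENNReal.tsum_comm]; rfl
      rw [h1, tsum_congr hcol, ← h2, hm]
    -- first marginal on `none`
    have hmassd₁ : mass d₁ ≠ ∞ := by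
      have : mass d₁ ≤ mass d₁' := ENNReal.tsum_le_tsum hle
      exact ne_top_of_le_ne_top (by simp) (this.trans h₁')
    have hsum : fstMarg ν none + mass d₁ = 1 := by
      have : mass ν = ∑' x, fstMarg ν x := by
        rw [mass, ENNReal.tsum_prod']; rfl
      rw [hmass] at this
      rw [tsum_option_ennreal] at this
      rw [this]
      exact congrArg (fstMarg ν none + ·) (tsum_congr hrow).symm
    have hnone : fstMarg ν none = 1 - mass d₁ :=
      ENNReal.eq_sub_of_add_eq hmassd₁ hsum
    refine ⟨hmass, ?_, hsnd⟩
    funext x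
    rcases x with _ | a
    · exact hnone
    · exact hrow a
  · intro a b
    calc μ (some a, some b) * r a ≤ μ (some a, some b) * 1 :=
          mul_le_mul_right (hr1 a) _
      _ = μ (some a, some b) := mul_one _

/-- Swapping a star-coupling. -/
lemma swap_star {A B : Type*} {μ : Option A × Option B → ℝ≥0∞}
    {d₁ : A → ℝ≥0∞} {d₂ : B → ℝ≥0∞} (h : IsStarCoupling μ d₁ d₂) :
    IsStarCoupling (fun p => μ (p.2, p.1)) d₂ d₁ := by
  obtain ⟨hm, hf, hs⟩ := h
  refine ⟨?_, hs, hf⟩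
  rw [← hm, mass, mass, ← (Equiv.prodComm (Option B) (Option A)).tsum_eq μ]
  rfl

/-- validity is antitone in the output sub-distributions. -/
theorem starCoupling_antitone {A B : Type*} [Countable A] [Countable B]
    (d₁ d₁' : A → ℝ≥0∞) (d₂ d₂' : B → ℝ≥0∞)
    (h₁' : IsSubDist d₁') (h₂' : IsSubDist d₂')
    (hle₁ : ∀ a, d₁ a ≤ d₁' a) (hle₂ : ∀ b, d₂ b ≤ d₂' b)
    (g : A × B → ℝ≥0∞)
    (μ₂ : Option A × Option B → ℝ≥0∞) (hμ₂ : IsStarCoupling μ₂ d₁' d₂') :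
    ∃ μ₁ : Option A × Option B → ℝ≥0∞,
      IsStarCoupling μ₁ d₁ d₂ ∧ expec μ₁ (fstar g) ≤ expec μ₂ (fstar g) := by
  obtain ⟨ν, hν, hνle⟩ := step d₁ d₁' d₂' h₁' hle₁ μ₂ hμ₂
  obtain ⟨ν', hν', hν'le⟩ := step d₂ d₂' d₁ h₂' hle₂ _ (swap_star hν)
  refine ⟨fun p => ν' (p.2, p.1), swap_star hν', ?_⟩
  refine ENNReal.tsum_le_tsum fun p => ?_
  rcases p with ⟨_ | a, _ | b⟩ <;> simp [fstar]
  exact mul_le_mul_left ((hν'le b a).trans (hνle a b)) _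
end
end

section
/- Rejection sampling correctness (one-step fixed-point form): let A be a finite nonempty set and X ⊊ A a proper subset. Let d be the sub-distribution on A defined as the limit of the Markov chain that samples uniformly from A and resamples while the result is in X. Then d is the uniform distribution on A \ X; equivalently, for every a ∈ A, the probability that the rejection sampler outputs a equals [a ∈ A \ X]/|A \ X|, and in particular the sampler terminates almost surely. -/
open scoped ENNReal
open Filter

noncomputable section

/-- correctness of rejection sampling: the limit of the truncated iterates
is the uniform distribution on `A \ X`, and the sampler terminates almost surely. -/
theorem rejection_sampling_correct {A : Type*} [Fintype A] [Nonempty A] [DecidableEq A]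
    (X : Finset A) (hX : X ≠ Finset.univ)
    (dn : ℕ → A → ℝ≥0∞)
    (h0 : ∀ a, dn 0 a = 0)
    (hrec : ∀ n a, dn (n + 1) a =
      (Fintype.card A : ℝ≥0∞)⁻¹ * (if a ∈ X then 0 else 1) +
        ((X.card : ℝ≥0∞) / (Fintype.card A : ℝ≥0∞)) * dn n a) :
    (∀ a, (⨆ n, dn n a) =
      if a ∈ X then 0 else (((Finset.univ \ X).card : ℝ≥0∞))⁻¹) ∧
    (∑' a, ⨆ n, dn n a) = 1 := by
  set N := Fintype.card A with hN
  set k := X.card with hk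
  have hkN : k < N := by
    have : X ⊂ Finset.univ := Finset.ssubset_univ_iff.mpr hX
    simpa [hN, hk, Finset.card_univ] using Finset.card_lt_card this
  have hN0 : (N : ℝ≥0∞) ≠ 0 := by
    simp [hN, Fintype.card_ne_zero]
  have hNtop : (N : ℝ≥0∞) ≠ ⊤ := ENNReal.natCast_ne_top N
  set r : ℝ≥0∞ := (k : ℝ≥0∞) / N with hr
  have hcard : (Finset.univ \ X).card = N - k := by
    simp [← Finset.compl_eq_univ_sdiff, Finset.card_compl, hN, hk]
  have hclosed : ∀ n a, dn n a =
      if a ∈ X then 0 else (N : ℝ≥0∞)⁻¹ * ∑ i ∈ Finset.range n, r ^ i := by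
    intro n
    induction n with
    | zero => intro a; simp [h0]
    | succ n ih =>
      intro a
      rw [hrec, ih a]
      by_cases ha : a ∈ X
      · simp [ha]
      · simp only [ha, if_false]
        rw [geom_sum_succ]
        ring
  have hsup : ∀ a, (⨆ n, dn n a) =
      if a ∈ X then 0 else (N : ℝ≥0∞)⁻¹ * (1 - r)⁻¹ := by
    intro a
    by_cases ha : a ∈ X
    · simp [hclosed, ha]
    · simp only [hclosed, ha, if_false]
      rw [← ENNReal.mul_iSup, ← ENNReal.tsum_eq_iSup_sum' (fun n => Finset.range n)
        (fun t => ⟨t.sup id + 1, fun x hx => Finset.mem_range.mpr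
          (Nat.lt_succ_of_le (Finset.le_sup (f := id) hx))⟩)]
      rw [ENNReal.tsum_geometric]
  have hone : 1 - r = ((N - k : ℕ) : ℝ≥0∞) / N := by
    have h1 : ((N - k : ℕ) : ℝ≥0∞) / N + r = 1 := by
      rw [hr, ENNReal.div_add_div_same]
      rw [← Nat.cast_add, Nat.sub_add_cancel hkN.le, ENNReal.div_self hN0 hNtop]
    rw [← h1]
    rw [ENNReal.add_sub_cancel_right]
    rw [hr]
    exact (ENNReal.div_lt_top (by simp) hN0).ne
  have hval : (N : ℝ≥0∞)⁻¹ * (1 - r)⁻¹ = ((N - k : ℕ) : ℝ≥0∞)⁻¹ := by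
    rw [hone, ENNReal.inv_div (Or.inl hNtop) (Or.inl hN0)]
    rw [← mul_div_assoc, ENNReal.inv_mul_cancel hN0 hNtop, one_div]
  have hmain : ∀ a, (⨆ n, dn n a) =
      if a ∈ X then 0 else (((Finset.univ \ X).card : ℝ≥0∞))⁻¹ := by
    intro a
    rw [hsup a, hval, hcard]
  refine ⟨hmain, ?_⟩
  have hnk0 : ((N - k : ℕ) : ℝ≥0∞) ≠ 0 := by
    exact Nat.cast_ne_zero.mpr (Nat.sub_ne_zero_of_lt hkN)
  calc (∑' a, ⨆ n, dn n a)
      = ∑ a, if a ∈ X then 0 else (((Finset.univ \ X).card : ℝ≥0∞))⁻¹ := by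
        rw [tsum_fintype]; exact Finset.sum_congr rfl fun a _ => hmain a
    _ = ∑ a ∈ Finset.univ \ X, (((Finset.univ \ X).card : ℝ≥0∞))⁻¹ := by
        rw [Finset.sum_ite, Finset.sum_const_zero, zero_add]
        congr 1
        ext a; simp
    _ = 1 := by
        rw [Finset.sum_const, nsmul_eq_mul, hcard]
        exact ENNReal.mul_inv_cancel hnk0 (ENNReal.natCast_ne_top _)
end
end
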